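/- arXiv:2109.09068 — 2 statements merged into one kernel-verified Lean document; each statement's English description precedes it below -/
import Mathlib

section
/- Consider the real first-order sigma-delta recursion: e_0 = 0, r_n = x_n - e_{n-1}, y_n = Q_b(r_n), e_n = y_n - r_n with |x_k| ≤ b for all k. Then for every n ≥ 1, the quantization error satisfies the closed form e_n = b - 2b·⟨(n-1)/2 + (1/(2b))·Σ_{k=1}^n x_k⟩, where ⟨·⟩ denotes the fractional part function. -/
/-- The 1-bit quantizer with level `b` (Q_b(0) = b). -/
noncomputable def oneBitQ (b x : ℝ) : ℝ := if x < 0 then -b else b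

/-! Writing the error as `e = b - 2b⟨t⟩` with a phase `t`, one step of the recursion only shifts
the phase: the quantizer input is `r = 2b s` with `s = ⟨t⟩ - 1/2 + x/(2b) ∈ [-1, 1)`, and on that
range `Q_b(2b s) - 2b s = b - 2b⟨s⟩`, while `⟨s⟩ = ⟨t + 1/2 + x/(2b)⟩`. Since `e_0 = 0` corresponds
to the phase `-1/2`, the phase after `n` steps is `(n-1)/2 + (1/(2b)) Σ x_k`. -/

theorem oneBitQ_sub_eq_fract {b s : ℝ} (hb : 0 < b) (h₁ : -1 ≤ s) (h₂ : s < 1) :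
    oneBitQ b (2 * b * s) - 2 * b * s = b - 2 * b * Int.fract s := by
  unfold oneBitQ
  split_ifs with hs
  · have hfract : Int.fract s = s + 1 :=
      Int.fract_eq_iff.2 ⟨by nlinarith, by nlinarith, -1, by push_cast; ring⟩
    rw [hfract]
    ring
  · rw [Int.fract_eq_self.2 ⟨by nlinarith, h₂⟩]

theorem sigmaDelta_error_step {b x t r : ℝ} (hb : 0 < b) (hx : |x| ≤ b)
    (hr : r = x - (b - 2 * b * Int.fract t)) :
    oneBitQ b r - r = b - 2 * b * Int.fract (t + 1 / 2 + x / (2 * b)) := by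
  have hr_scaled : r = 2 * b * (Int.fract t - 1 / 2 + x / (2 * b)) := by
    rw [hr]; field_simp; ring
  have hxb : -(1 / 2) ≤ x / (2 * b) ∧ x / (2 * b) ≤ 1 / 2 := by
    rw [le_div_iff₀ (by positivity), div_le_iff₀ (by positivity)]
    constructor <;> linarith [abs_le.1 hx]
  have hfract : Int.fract (Int.fract t - 1 / 2 + x / (2 * b)) =
      Int.fract (t + 1 / 2 + x / (2 * b)) :=
    Int.fract_eq_fract.2 ⟨-⌊t⌋ - 1, by rw [Int.fract]; push_cast; ring⟩
  rw [hr_scaled, oneBitQ_sub_eq_fract hb (by linarith [Int.fract_nonneg t])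
    (by linarith [Int.fract_lt_one t]), hfract]

/-- Closed form for the quantization error of a first-order sigma-delta quantizer
(Lemma 1 of the paper, real part):
e_n = b - 2b⟨(n-1)/2 + (1/(2b))Σ_{k=1}^n x_k⟩. -/
theorem sigmaDelta_error_closed_form (b : ℝ) (hb : 0 < b)
    (x y e r : ℕ → ℝ) (he0 : e 0 = 0)
    (hx : ∀ k, 1 ≤ k → |x k| ≤ b)
    (hr : ∀ n, 1 ≤ n → r n = x n - e (n - 1))
    (hy : ∀ n, 1 ≤ n → y n = oneBitQ b (r n))
    (he : ∀ n, 1 ≤ n → e n = y n - r n) :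
    ∀ n, 1 ≤ n →
      e n = b - 2 * b *
        Int.fract (((n : ℝ) - 1) / 2 + (1 / (2 * b)) * ∑ k ∈ Finset.Icc 1 n, x k) := by
  suffices h : ∀ n : ℕ, e n = b - 2 * b *
      Int.fract (((n : ℝ) - 1) / 2 + (1 / (2 * b)) * ∑ k ∈ Finset.Icc 1 n, x k) from
    fun n _ ↦ h n
  intro n
  induction n with
  | zero =>
    have hfract : Int.fract (((0 : ℝ) - 1) / 2) = 1 / 2 :=
      Int.fract_eq_iff.2 ⟨by norm_num, by norm_num, -1, by norm_num⟩
    rw [he0, Finset.Icc_eq_empty_of_lt one_pos, Finset.sum_empty, Nat.cast_zero, mul_zero,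
      add_zero, hfract]
    ring
  | succ n ih =>
    have hn : 1 ≤ n + 1 := Nat.le_add_left 1 n
    have hr_succ : r (n + 1) = x (n + 1) - e n := by rw [hr _ hn, Nat.add_sub_cancel]
    rw [he _ hn, hy _ hn, sigmaDelta_error_step hb (hx _ hn) (hr_succ.trans (by rw [ih])),
      Finset.sum_Icc_succ_top hn]
    congr 3
    push_cast
    ring
end

section
/- Let U⁻¹ be the N×N lower bidiagonal matrix with ones on the diagonal and -1 on the first subdiagonal (the case φ = 0). For a unit-modulus steering vector a(θ) ∈ ℂ^N with entries a_n = e^{-i 2π d (n-1) sin θ}, the squared norm of the filtered vector satisfies ‖U⁻ᴴ a(θ)‖² = 1 + (N-1)·|1 - e^{i 2π d sin θ}|² = 1 + 4(N-1)sin²(π d sin θ). In particular it is minimized over θ at θ = 0 (array broadside), where it equals 1. -/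
/-!
The steering vector is geometric, `a n = wⁿ` with `w = e^{-i 2π d sin θ}` of modulus one, and
`U⁻ᴴ` is the forward difference, so `U⁻ᴴ a` has the `N - 1` entries `wⁿ (1 - w)` of norm
`|1 - w|` followed by the single entry `w^{N-1}` of norm one. Finally
`|1 - e^{ix}| = 2 |sin (x / 2)|`, which vanishes at `θ = 0`.
-/

open Real
open scoped Matrix

/-- The matrix `U⁻¹` for `φ = 0`. -/
def firstDifferenceMatrix {R : Type*} [Ring R] (N : ℕ) : Matrix (Fin N) (Fin N) R :=
  fun j k => if j = k then 1 else if (j : ℕ) = (k : ℕ) + 1 then -1 else 0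

theorem conjTranspose_firstDifferenceMatrix_mulVec_apply {R : Type*} [Ring R] [StarRing R]
    {N : ℕ} (v : Fin N → R) (i : Fin N) :
    ((firstDifferenceMatrix N)ᴴ *ᵥ v) i =
      v i - if h : (i : ℕ) + 1 < N then v ⟨(i : ℕ) + 1, h⟩ else 0 := by
  have hterm : ∀ k, star (firstDifferenceMatrix N k i) * v k =
      (if k = i then v k else 0) - if (k : ℕ) = (i : ℕ) + 1 then v k else 0 := by
    intro k
    by_cases hki : k = i
    · subst hki; simp [firstDifferenceMatrix]
    · by_cases hsucc : (k : ℕ) = (i : ℕ) + 1 <;> simp [firstDifferenceMatrix, hki, hsucc]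
  simp only [Matrix.mulVec, dotProduct, Matrix.conjTranspose_apply, hterm,
    Finset.sum_sub_distrib, Finset.sum_ite_eq', Finset.mem_univ, if_true]
  split_ifs with h
  · rw [Finset.sum_eq_single_of_mem ⟨(i : ℕ) + 1, h⟩ (Finset.mem_univ _)
      fun k _ hk => if_neg fun hk' => hk (Fin.ext hk'), if_pos rfl]
  · rw [Finset.sum_eq_zero fun k _ => if_neg (by have := k.isLt; omega)]

theorem sum_norm_sq_conjTranspose_firstDifferenceMatrix_mulVec_pow {𝕜 : Type*} [NormedField 𝕜]
    [StarRing 𝕜] (m : ℕ) {z : 𝕜} (hz : ‖z‖ = 1) :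
    ∑ i, ‖((firstDifferenceMatrix (m + 1))ᴴ *ᵥ fun n : Fin (m + 1) => z ^ (n : ℕ)) i‖ ^ 2 =
      m * ‖1 - z‖ ^ 2 + 1 := by
  simp only [conjTranspose_firstDifferenceMatrix_mulVec_apply]
  rw [Fin.sum_univ_castSucc]
  have hinner : ∀ i : Fin m, ‖(z ^ (i : ℕ) - z ^ ((i : ℕ) + 1))‖ ^ 2 = ‖1 - z‖ ^ 2 := by
    intro i
    rw [pow_succ z, ← mul_one_sub, norm_mul, norm_pow, hz, one_pow, one_mul]
  simp [hinner, hz]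

theorem Complex.norm_one_sub_exp_neg_I_mul_ofReal_sq (x : ℝ) :
    ‖1 - Complex.exp (-Complex.I * x)‖ ^ 2 = 4 * Real.sin (x / 2) ^ 2 := by
  have hneg : -Complex.I * x = Complex.I * ((-x : ℝ) : ℂ) := by push_cast; ring
  rw [hneg, norm_sub_rev, Complex.norm_exp_I_mul_ofReal_sub_one, norm_mul, mul_pow,
    neg_div, Real.sin_neg, norm_neg, Real.norm_eq_abs, sq_abs]
  norm_num

theorem Complex.norm_one_sub_exp_I_mul_ofReal_sq (x : ℝ) :
    ‖1 - Complex.exp (Complex.I * x)‖ ^ 2 = 4 * Real.sin (x / 2) ^ 2 := by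
  simpa [neg_div] using Complex.norm_one_sub_exp_neg_I_mul_ofReal_sq (-x)

theorem sigmaDelta_noise_shaping_general (N : ℕ) (hN : 1 ≤ N) (d : ℝ) (θ : ℝ) :
    (let a : ℝ → Fin N → ℂ := fun t n =>
      Complex.exp (-Complex.I * (2 * π * d * (n : ℕ) * Real.sin t))
    let B : Matrix (Fin N) (Fin N) ℂ :=
      fun j k => if j = k then 1 else if (j : ℕ) = (k : ℕ) + 1 then -1 else 0
    let f : ℝ → ℝ := fun t => ∑ i, ‖(B.conjTranspose.mulVec (a t)) i‖ ^ 2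
    f θ = 1 + ((N : ℝ) - 1) *
        ‖1 - Complex.exp (Complex.I * (2 * π * d * Real.sin θ))‖ ^ 2 ∧
      f θ = 1 + 4 * ((N : ℝ) - 1) * Real.sin (π * d * Real.sin θ) ^ 2 ∧
      f 0 ≤ f θ ∧ f 0 = 1) := by
  intro a B f
  obtain ⟨m, rfl⟩ : ∃ m, N = m + 1 := ⟨N - 1, by omega⟩
  have hf : ∀ t, f t = m * (4 * Real.sin (π * d * Real.sin t) ^ 2) + 1 := by
    intro t
    set x : ℝ := 2 * π * d * Real.sin t
    have ha : a t = fun n : Fin (m + 1) => Complex.exp (-Complex.I * x) ^ (n : ℕ) := by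
      funext n
      rw [← Complex.exp_nat_mul]
      simp only [a, x]
      push_cast
      congr 1
      ring
    have hx : x / 2 = π * d * Real.sin t := by ring
    have hz : ‖Complex.exp (-Complex.I * x)‖ = 1 := by
      rw [neg_mul, ← mul_neg, ← Complex.ofReal_neg, Complex.norm_exp_I_mul_ofReal]
    rw [← hx, ← Complex.norm_one_sub_exp_neg_I_mul_ofReal_sq,
      ← sum_norm_sq_conjTranspose_firstDifferenceMatrix_mulVec_pow m hz, ← ha]
    rfl
  refine ⟨?_, ?_, ?_, ?_⟩
  · have hcast : (2 * π * d * Real.sin θ : ℂ) = ((2 * π * d * Real.sin θ : ℝ) : ℂ) := by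
      simp only [Complex.ofReal_mul, Complex.ofReal_ofNat]
    have hhalf : 2 * π * d * Real.sin θ / 2 = π * d * Real.sin θ := by ring
    rw [hf, hcast, Complex.norm_one_sub_exp_I_mul_ofReal_sq, hhalf]
    push_cast
    ring
  · rw [hf]
    push_cast
    ring
  · rw [hf, hf, Real.sin_zero, mul_zero, Real.sin_zero]
    norm_num
    positivity
  · simp [hf]

/-- Quantization noise shaping of the first-order sigma-delta ADC (φ = 0):
‖U⁻ᴴ a(θ)‖² = 1 + (N-1)|1 - e^{i2πd sin θ}|² = 1 + 4(N-1)sin²(πd sin θ),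
which is minimized at broadside θ = 0, where it equals 1. -/
theorem sigmaDelta_noise_shaping (N : ℕ) (hN : 1 ≤ N) (d : ℝ) (hd : 0 < d) (θ : ℝ) :
    (let a : ℝ → Fin N → ℂ := fun t n =>
      Complex.exp (-Complex.I * (2 * π * d * (n : ℕ) * Real.sin t))
    let B : Matrix (Fin N) (Fin N) ℂ :=
      fun j k => if j = k then 1 else if (j : ℕ) = (k : ℕ) + 1 then -1 else 0
    let f : ℝ → ℝ := fun t => ∑ i, ‖(B.conjTranspose.mulVec (a t)) i‖ ^ 2
    f θ = 1 + ((N : ℝ) - 1) *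
        ‖1 - Complex.exp (Complex.I * (2 * π * d * Real.sin θ))‖ ^ 2 ∧
      f θ = 1 + 4 * ((N : ℝ) - 1) * Real.sin (π * d * Real.sin θ) ^ 2 ∧
      f 0 ≤ f θ ∧ f 0 = 1) :=
  sigmaDelta_noise_shaping_general N hN d θ
end
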